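/- arXiv:2403.03873 — 7 statements merged into one kernel-verified Lean document; each statement's English description precedes it below -/
import Mathlib

section
/- Let W be an N×N matrix weight and let V, N be differential operators with matrix polynomial coefficients such that for all matrix polynomials P,Q: ⟨P·V, Q⟩_{W̃} = ⟨P, Q·N⟩_W, where W̃ is another matrix weight, V is degree-preserving, and D = VN lies in D(W). Then the monic orthogonal polynomials P_n of W satisfy: the polynomials P_n·V form an orthogonal sequence with respect to W̃, i.e., ⟨P_n·V, P_m·V⟩_{W̃} = 0 for n ≠ m, and each P_n·V has degree n with nonsingular leading coefficient. -/
open Matrix Polynomial MeasureTheory Finset ComplexOrder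

variable {d : ℕ}

/-- Entrywise derivative of a matrix polynomial. -/
noncomputable def pd (Q : Matrix (Fin d) (Fin d) (Polynomial ℂ)) :
    Matrix (Fin d) (Fin d) (Polynomial ℂ) :=
  Q.map fun p => derivative p

/-- The right action `P ↦ P·D` of the matrix differential operator
`D = Σ_{k=0}^{ℓ} ∂^k F_k` with matrix polynomial coefficients `F k`. -/
noncomputable def act (ℓ : ℕ) (F : ℕ → Matrix (Fin d) (Fin d) (Polynomial ℂ))
    (P : Matrix (Fin d) (Fin d) (Polynomial ℂ)) : Matrix (Fin d) (Fin d) (Polynomial ℂ) :=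
  ∑ k ∈ Finset.range (ℓ + 1), pd^[k] P * F k

/-- The matrix-valued sesquilinear form `⟨P,Q⟩_W = ∫_S P(x) W(x) Q(x)* dx`. -/
noncomputable def ip (S : Set ℝ) (U : ℝ → Matrix (Fin d) (Fin d) ℂ)
    (P Q : Matrix (Fin d) (Fin d) (Polynomial ℂ)) : Matrix (Fin d) (Fin d) ℂ :=
  Matrix.of fun i j => ∫ x in S,
    (P.map (Polynomial.eval (x : ℂ)) * U x * (Q.map (Polynomial.eval (x : ℂ)))ᴴ) i j

/-- `Q` is a matrix polynomial of degree `k` (entrywise degree ≤ k and nonzero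
`k`-th coefficient matrix). -/
def hasDeg (Q : Matrix (Fin d) (Fin d) (Polynomial ℂ)) (k : ℕ) : Prop :=
  (∀ i j, (Q i j).natDegree ≤ k) ∧
    (Matrix.of fun i j => (Q i j).coeff k) ≠ (0 : Matrix (Fin d) (Fin d) ℂ)

lemma pd_constMul (A : Matrix (Fin d) (Fin d) ℂ) (P : Matrix (Fin d) (Fin d) (Polynomial ℂ)) :
    pd (A.map Polynomial.C * P) = A.map Polynomial.C * pd P := by
  ext i j
  simp [pd, Matrix.mul_apply, Matrix.map_apply, derivative_sum]

lemma pdIter_constMul (A : Matrix (Fin d) (Fin d) ℂ) (k : ℕ)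
    (P : Matrix (Fin d) (Fin d) (Polynomial ℂ)) :
    pd^[k] (A.map Polynomial.C * P) = A.map Polynomial.C * pd^[k] P := by
  induction k generalizing P with
  | zero => simp
  | succ k ih => rw [Function.iterate_succ_apply, pd_constMul, ih, Function.iterate_succ_apply]

lemma act_constMul (ℓ : ℕ) (F : ℕ → Matrix (Fin d) (Fin d) (Polynomial ℂ))
    (A : Matrix (Fin d) (Fin d) ℂ) (P : Matrix (Fin d) (Fin d) (Polynomial ℂ)) :
    act ℓ F (A.map Polynomial.C * P) = A.map Polynomial.C * act ℓ F P := by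
  unfold act
  rw [Finset.mul_sum]
  refine Finset.sum_congr rfl fun k _ => ?_
  rw [pdIter_constMul, Matrix.mul_assoc]

lemma evalMap_constMul (A : Matrix (Fin d) (Fin d) ℂ)
    (P : Matrix (Fin d) (Fin d) (Polynomial ℂ)) (x : ℂ) :
    (A.map Polynomial.C * P).map (Polynomial.eval x) = A * P.map (Polynomial.eval x) := by
  ext i j
  simp [Matrix.mul_apply, Matrix.map_apply, Polynomial.eval_finset_sum]

lemma coeffM_constMul (A : Matrix (Fin d) (Fin d) ℂ)
    (P : Matrix (Fin d) (Fin d) (Polynomial ℂ)) (k : ℕ) :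
    (Matrix.of fun i j => ((A.map Polynomial.C * P) i j).coeff k)
      = A * Matrix.of fun i j => ((P i j).coeff k) := by
  ext i j
  simp [Matrix.mul_apply, Matrix.map_apply, Polynomial.finset_sum_coeff, Polynomial.coeff_C_mul]

lemma ip_constMul_right (S : Set ℝ) (U : ℝ → Matrix (Fin d) (Fin d) ℂ)
    (P Q : Matrix (Fin d) (Fin d) (Polynomial ℂ)) (A : Matrix (Fin d) (Fin d) ℂ)
    (hint : ∀ i j, IntegrableOn (fun x : ℝ =>
      (P.map (Polynomial.eval (x : ℂ)) * U x * (Q.map (Polynomial.eval (x : ℂ)))ᴴ) i j) S) :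
    ip S U P (A.map Polynomial.C * Q) = ip S U P Q * Aᴴ := by
  ext i j
  rw [Matrix.mul_apply]
  simp only [ip, Matrix.of_apply]
  have h1 : ∀ x : ℝ,
      (P.map (Polynomial.eval (x : ℂ)) * U x *
          ((A.map Polynomial.C * Q).map (Polynomial.eval (x : ℂ)))ᴴ) i j
        = ∑ l, (P.map (Polynomial.eval (x : ℂ)) * U x *
            (Q.map (Polynomial.eval (x : ℂ)))ᴴ) i l * Aᴴ l j := by
    intro x
    rw [evalMap_constMul, Matrix.conjTranspose_mul, ← Matrix.mul_assoc, Matrix.mul_apply]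
  simp_rw [h1]
  rw [MeasureTheory.integral_finset_sum _ (fun l _ => (hint i l).mul_const _)]
  exact Finset.sum_congr rfl fun l _ => integral_mul_const _ _

/-- If `V` is degree preserving, `N` satisfies `⟨P·V,Q⟩_{W̃} = ⟨P,Q·N⟩_W` (i.e.
`N = W̃V*W⁻¹` is the adjoint of `V` between the two weights), and `D = VN ∈ D(W)`,
then the monic orthogonal polynomials `P_n` of `W` are mapped by `V` to a sequence
of orthogonal polynomials for `W̃`: the `P_n·V` are pairwise orthogonal w.r.t. `W̃`
and each has degree `n` with nonsingular leading coefficient. -/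
theorem stmt3 (S : Set ℝ) (W Wt : ℝ → Matrix (Fin d) (Fin d) ℂ)
    (hWpos : ∀ x ∈ S, (W x).PosDef) (hWtpos : ∀ x ∈ S, (Wt x).PosDef)
    -- finite moments: all matrix polynomial integrands are integrable
    (hWint : ∀ P Q : Matrix (Fin d) (Fin d) (Polynomial ℂ), ∀ i j,
      IntegrableOn (fun x : ℝ =>
        (P.map (Polynomial.eval (x : ℂ)) * W x *
          (Q.map (Polynomial.eval (x : ℂ)))ᴴ) i j) S)
    (hWtint : ∀ P Q : Matrix (Fin d) (Fin d) (Polynomial ℂ), ∀ i j,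
      IntegrableOn (fun x : ℝ =>
        (P.map (Polynomial.eval (x : ℂ)) * Wt x *
          (Q.map (Polynomial.eval (x : ℂ)))ᴴ) i j) S)
    (ℓV ℓN : ℕ) (FV FN : ℕ → Matrix (Fin d) (Fin d) (Polynomial ℂ))
    -- the monic orthogonal polynomials of W
    (P : ℕ → Matrix (Fin d) (Fin d) (Polynomial ℂ))
    (hPdeg : ∀ n, ∀ i j, ((P n) i j).natDegree ≤ n)
    (hPmonic : ∀ n, (Matrix.of fun i j => ((P n) i j).coeff n) =
      (1 : Matrix (Fin d) (Fin d) ℂ))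
    (hPorth : ∀ n m, n ≠ m → ip S W (P n) (P m) = 0)
    -- V is degree preserving
    (hdegpres : ∀ Q k, hasDeg Q k → hasDeg (act ℓV FV Q) k)
    -- D = VN belongs to D(W)
    (hDW : ∀ n, ∃ Λ : Matrix (Fin d) (Fin d) ℂ,
      act ℓN FN (act ℓV FV (P n)) = Λ.map Polynomial.C * P n)
    -- ⟨P·V, Q⟩_{W̃} = ⟨P, Q·N⟩_W
    (hadj : ∀ P' Q : Matrix (Fin d) (Fin d) (Polynomial ℂ),
      ip S Wt (act ℓV FV P') Q = ip S W P' (act ℓN FN Q)) :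
    (∀ n m, n ≠ m → ip S Wt (act ℓV FV (P n)) (act ℓV FV (P m)) = 0) ∧
    (∀ n, (∀ i j, ((act ℓV FV (P n)) i j).natDegree ≤ n) ∧
      IsUnit (Matrix.of fun i j => ((act ℓV FV (P n)) i j).coeff n)) := by
  have key : ∀ n m, n ≠ m → ip S Wt (act ℓV FV (P n)) (act ℓV FV (P m)) = 0 := by
    intro n m hnm
    obtain ⟨Λ, hΛ⟩ := hDW m
    rw [hadj, hΛ, ip_constMul_right S W _ _ _ (hWint _ _), hPorth n m hnm, Matrix.zero_mul]
  refine ⟨key, fun n => ?_⟩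
  rcases Nat.eq_zero_or_pos d with hd | hd
  · subst hd
    refine ⟨fun i j => i.elim0, ?_⟩
    have h1 : (Matrix.of fun i j => ((act ℓV FV (P n)) i j).coeff n)
        = (1 : Matrix (Fin 0) (Fin 0) ℂ) := by
      ext i j; exact i.elim0
    rw [h1]; exact isUnit_one
  · have i0 : Fin d := ⟨0, hd⟩
    have hPn : hasDeg (P n) n := by
      refine ⟨hPdeg n, ?_⟩
      rw [hPmonic n]
      intro h
      have h2 := congrFun (congrFun h i0) i0
      simp [Matrix.one_apply_eq] at h2
    have hAct := hdegpres (P n) n hPn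
    refine ⟨hAct.1, ?_⟩
    by_contra hL
    set L := Matrix.of fun i j => ((act ℓV FV (P n)) i j).coeff n with hLdef
    have hdet : L.det = 0 := by
      by_contra hdet
      exact hL ((Matrix.isUnit_iff_isUnit_det L).2 (isUnit_iff_ne_zero.2 hdet))
    obtain ⟨v, hv0, hv⟩ := Matrix.exists_vecMul_eq_zero_iff.2 hdet
    set A : Matrix (Fin d) (Fin d) ℂ := Matrix.of fun _ j => v j with hAdef
    have hQdeg : hasDeg (A.map Polynomial.C * P n) n := by
      constructor
      · intro i j
        rw [Matrix.mul_apply]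
        refine Polynomial.natDegree_sum_le_of_forall_le _ _ fun l _ => ?_
        simp only [Matrix.map_apply]
        exact (Polynomial.natDegree_C_mul_le _ _).trans (hPdeg n l j)
      · rw [coeffM_constMul, hPmonic n, Matrix.mul_one]
        intro h
        obtain ⟨j, hj⟩ := Function.ne_iff.1 hv0
        exact hj (congrFun (congrFun h i0) j)
    have hQ := hdegpres _ n hQdeg
    apply hQ.2
    rw [act_constMul, coeffM_constMul, ← hLdef]
    ext i j
    have h3 := congrFun hv j
    simp only [Matrix.vecMul, dotProduct] at h3
    simpa [Matrix.mul_apply, hAdef] using h3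
end

section
/- Let α > -1, a ≠ 0, and consider the 2×2 differential operators (acting on the right) V = ∂[[0,x],[-1,ax]] + [[-1/a, α+1],[0, 1/a]] and N = ∂[[-ax, x],[-1,0]] + [[-a-1/a, α+1],[0, 1/a]]. Then the composition VN equals the operator D = -∂² x I - ∂ [[α+2-x, 0],[0, α+1-x]] + [[1+1/a², 0],[0, 1/a²]]. -/
open Matrix

/-- Entrywise derivative of a matrix-valued function of a real variable. -/
noncomputable def md (P : ℝ → Matrix (Fin 2) (Fin 2) ℝ) : ℝ → Matrix (Fin 2) (Fin 2) ℝ :=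
  fun x => Matrix.of fun i j => deriv (fun t => P t i j) x

set_option maxHeartbeats 2000000 in
theorem stmt6 (a α : ℝ) (ha : a ≠ 0) (hα : -1 < α)
    (P : ℝ → Matrix (Fin 2) (Fin 2) ℝ)
    (hP : ∀ i j, ContDiff ℝ (⊤ : ℕ∞) fun t => P t i j) (x : ℝ) :
    -- (P·V)·N, where V = ∂[[0,x],[-1,ax]] + [[-1/a, α+1],[0, 1/a]] and
    -- N = ∂[[-ax, x],[-1,0]] + [[-a-1/a, α+1],[0, 1/a]]
    (md (fun t => md P t * !![0, t; -1, a * t] + P t * !![-1/a, α + 1; 0, 1/a]) x *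
        !![-a * x, x; -1, 0] +
      (md P x * !![0, x; -1, a * x] + P x * !![-1/a, α + 1; 0, 1/a]) *
        !![-a - 1/a, α + 1; 0, 1/a]) =
    -- P·D, where D = -∂²xI - ∂[[α+2-x, 0],[0, α+1-x]] + [[1+1/a², 0],[0, 1/a²]]
    (-(md (md P) x * !![x, 0; 0, x]) - md P x * !![α + 2 - x, 0; 0, α + 1 - x] +
      P x * !![1 + 1/a^2, 0; 0, 1/a^2]) := by
  have hf : ∀ i j, Differentiable ℝ (fun t => P t i j) := fun i j => (hP i j).differentiable (by simp)
  have hg : ∀ i j, Differentiable ℝ (deriv (fun t => P t i j)) := fun i j =>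
    ((contDiff_infty_iff_deriv.mp ((hP i j).of_le (by simp))).2).differentiable (by norm_cast)
  have hka : deriv (fun t : ℝ => a * t) = fun _ => a := by
    funext y; simpa using (((hasDerivAt_id y).const_mul a).deriv)
  ext i j
  fin_cases i <;> fin_cases j <;>
    simp (disch := fun_prop) only [md, Matrix.add_apply, Matrix.mul_apply, Matrix.of_apply,
      Fin.sum_univ_two, Matrix.cons_val', Matrix.cons_val_zero, Matrix.cons_val_one,
      Matrix.head_cons, Matrix.head_fin_const, Matrix.empty_val', Matrix.cons_val_fin_one,
      Matrix.neg_apply, Matrix.sub_apply, Fin.isValue, Fin.zero_eta, Fin.mk_one,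
      deriv_fun_add, deriv_fun_mul, deriv_mul_const, deriv_const_mul, deriv_id'', deriv_const', hka] <;>
  field_simp <;> ring
end

section
/- Let L_n^α denote the monic Laguerre orthogonal polynomials for the weight e^{-x}x^α on (0,∞) (α > -1) and let a ≠ 0. Then for every n ≥ 0, the matrix polynomial Q_n(x) = [[-(1/a)L_n^{α+1}(x), (α+1)L_n^{α+1}(x) + x (L_n^{α+1})'(x)],[-(L_n^α)'(x), (1/a)L_n^α(x) + a x (L_n^α)'(x)]] satisfies ∫₀^∞ Q_n(x) W(x) Q_m(x)* dx = 0 for all n ≠ m, where W(x) = e^{-x}x^α[[x(1+a²x), ax],[ax,1]]. -/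
/-!
Write `w_γ(x) = e^{-x} x^γ`, so that `W = w_α Ŵ` with `Ŵ = [[x(1+a²x), ax], [ax, 1]]`. For `n < m`
a direct computation writes each entry of `Q_n Ŵ Q_mᵀ` as `x r' + (α + 1 - x) r` plus either
`x q L_m^{α+1}` or `q L_m^α`, where `q = c L_n - (x L_n'' + (β + 1 - x) L_n')`, with `β` the
parameter of `L_n`, has degree at most `n`. Since `(x w_α)' = (α + 1 - x) w_α`, the first part
times `w_α` is the derivative of `x w_α r`, which vanishes at both ends, and the second part
integrates to zero because `L_m` is orthogonal to every polynomial of lower degree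
(note `x w_α = w_{α+1}`). The case `n > m` follows from the symmetry of `Ŵ`.
-/

open Matrix Polynomial MeasureTheory Real Set Filter Topology

noncomputable def laguerreIntegral (γ : ℝ) (p : ℝ[X]) : ℝ :=
  ∫ x in Ioi 0, p.eval x * (exp (-x) * x ^ γ)

noncomputable def laguerreStein (γ : ℝ) (r : ℝ[X]) : ℝ[X] :=
  X * derivative r + (C (γ + 1) - X) * r

lemma integrableOn_eval_mul_exp_neg_mul_rpow {γ : ℝ} (hγ : -1 < γ) (p : ℝ[X]) :
    IntegrableOn (fun x => p.eval x * (exp (-x) * x ^ γ)) (Ioi 0) := by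
  induction p using Polynomial.induction_on' with
  | add p q hp hq =>
    simp only [eval_add, add_mul]
    exact hp.add hq
  | monomial k c =>
    have hΓ : IntegrableOn (fun x : ℝ => exp (-x) * x ^ (γ + k)) (Ioi 0) := by
      have : (0 : ℝ) ≤ k := k.cast_nonneg
      simpa using GammaIntegral_convergent (s := γ + k + 1) (by linarith)
    refine IntegrableOn.congr_fun (hΓ.const_mul c) (fun x (hx : 0 < x) => ?_) measurableSet_Ioi
    rw [rpow_add hx, rpow_natCast, eval_monomial]
    ring

lemma tendsto_eval_mul_exp_neg_mul_rpow_atTop (γ : ℝ) (p : ℝ[X]) :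
    Tendsto (fun x => p.eval x * (exp (-x) * x ^ γ)) atTop (𝓝 0) := by
  induction p using Polynomial.induction_on' with
  | add p q hp hq => simpa only [eval_add, add_mul, add_zero] using hp.add hq
  | monomial k c =>
    have h := (tendsto_rpow_mul_exp_neg_mul_atTop_nhds_zero (γ + k) 1 one_pos).const_mul c
    rw [mul_zero] at h
    refine h.congr' ?_
    filter_upwards [eventually_gt_atTop 0] with x hx
    rw [rpow_add hx, rpow_natCast, eval_monomial, neg_one_mul]
    ring

lemma laguerreIntegral_add {γ : ℝ} (hγ : -1 < γ) (p q : ℝ[X]) :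
    laguerreIntegral γ (p + q) = laguerreIntegral γ p + laguerreIntegral γ q := by
  simp only [laguerreIntegral, eval_add, add_mul]
  exact integral_add (integrableOn_eval_mul_exp_neg_mul_rpow hγ p)
    (integrableOn_eval_mul_exp_neg_mul_rpow hγ q)

lemma laguerreIntegral_smul (γ c : ℝ) (p : ℝ[X]) :
    laguerreIntegral γ (c • p) = c • laguerreIntegral γ p := by
  simp only [laguerreIntegral, eval_smul, smul_eq_mul, mul_assoc, integral_const_mul]

lemma laguerreIntegral_X_mul (γ : ℝ) (p : ℝ[X]) :
    laguerreIntegral γ (X * p) = laguerreIntegral (γ + 1) p := by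
  refine setIntegral_congr_fun measurableSet_Ioi fun x (hx : 0 < x) => ?_
  simp only [eval_mul, eval_X, rpow_add_one hx.ne']
  ring

lemma laguerreIntegral_laguerreStein {γ : ℝ} (hγ : -1 < γ) (r : ℝ[X]) :
    laguerreIntegral γ (laguerreStein γ r) = 0 := by
  have hγ' : 0 < γ + 1 := by linarith
  have hderiv : ∀ x ∈ Ioi (0 : ℝ), HasDerivAt (fun y => r.eval y * (exp (-y) * y ^ (γ + 1)))
      ((laguerreStein γ r).eval x * (exp (-x) * x ^ γ)) x := by
    intro x (hx : 0 < x)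
    have hexp : HasDerivAt (fun y => exp (-y)) (-exp (-x)) x := by
      simpa using (hasDerivAt_neg x).exp
    have hpow : HasDerivAt (fun y => y ^ (γ + 1)) ((γ + 1) * x ^ γ) x := by
      simpa using hasDerivAt_rpow_const (p := γ + 1) (Or.inl hx.ne')
    refine ((r.hasDerivAt x).mul (hexp.mul hpow)).congr_deriv ?_
    simp only [laguerreStein, eval_add, eval_mul, eval_sub, eval_X, eval_C, Pi.mul_apply,
      rpow_add_one hx.ne']
    ring
  have hcont : ContinuousWithinAt (fun y => r.eval y * (exp (-y) * y ^ (γ + 1))) (Ici 0) 0 :=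
    (r.continuousAt.mul ((continuous_exp.comp continuous_neg).continuousAt.mul
      (continuousAt_rpow_const 0 (γ + 1) (Or.inr hγ'.le)))).continuousWithinAt
  rw [laguerreIntegral, integral_Ioi_of_hasDerivAt_of_tendsto hcont hderiv
    (integrableOn_eval_mul_exp_neg_mul_rpow hγ _)
    (tendsto_eval_mul_exp_neg_mul_rpow_atTop (γ + 1) r)]
  simp [zero_rpow hγ'.ne']

lemma laguerreIntegral_laguerreStein_add {γ : ℝ} (hγ : -1 < γ) (r p : ℝ[X]) :
    laguerreIntegral γ (laguerreStein γ r + p) = laguerreIntegral γ p := by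
  rw [laguerreIntegral_add hγ, laguerreIntegral_laguerreStein hγ, zero_add]

lemma laguerreIntegral_mul_eq_zero_of_degree_lt {γ : ℝ} (hγ : -1 < γ) {L : ℕ → ℝ[X]}
    (hdeg : ∀ n, (L n).degree = n)
    (horth : ∀ n m, n ≠ m → laguerreIntegral γ (L n * L m) = 0)
    {m : ℕ} {q : ℝ[X]} (hq : q.degree < m) :
    laguerreIntegral γ (q * L m) = 0 := by
  let S : Sequence ℝ := ⟨L, hdeg⟩
  have hspan := S.span_degreeLT (m := m) fun i _ => (leadingCoeff_ne_zero.2 (S.ne_zero i)).isUnit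
  have hqS : q ∈ Submodule.span ℝ (L '' Iio m) := hspan ▸ mem_degreeLT.2 hq
  clear hq
  induction hqS using Submodule.span_induction with
  | mem p hp =>
    obtain ⟨i, hi, rfl⟩ := hp
    exact horth i m (ne_of_lt hi)
  | zero => simp [laguerreIntegral]
  | add p q _ _ hp hq => rw [add_mul, laguerreIntegral_add hγ, hp, hq, add_zero]
  | smul c p _ hp => rw [smul_mul_assoc, laguerreIntegral_smul, hp, smul_zero]

lemma natDegree_laguerreStein_le (γ : ℝ) (r : ℝ[X]) :
    (laguerreStein γ r).natDegree ≤ r.natDegree + 1 := by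
  have hX : (X * derivative r).natDegree ≤ r.natDegree + 1 :=
    natDegree_mul_le.trans (by grw [natDegree_X_le, natDegree_derivative_le]; omega)
  have hlin : ((C (γ + 1) - X) * r).natDegree ≤ r.natDegree + 1 :=
    natDegree_mul_le.trans (by grw [natDegree_sub_le, natDegree_C, natDegree_X_le]; omega)
  exact (natDegree_add_le _ _).trans (max_le hX hlin)

lemma natDegree_laguerreStein_derivative_le (γ : ℝ) (p : ℝ[X]) :
    (laguerreStein γ (derivative p)).natDegree ≤ p.natDegree := by
  rcases Nat.eq_zero_or_pos p.natDegree with h | h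
  · obtain ⟨c, rfl⟩ : ∃ c, p = C c := ⟨_, eq_C_of_natDegree_eq_zero h⟩
    simp [laguerreStein]
  · have := natDegree_derivative_le p
    grw [natDegree_laguerreStein_le]
    omega

lemma natDegree_C_mul_sub_laguerreStein_derivative_le (c γ : ℝ) (p : ℝ[X]) :
    (C c * p - laguerreStein γ (derivative p)).natDegree ≤ p.natDegree :=
  (natDegree_sub_le _ _).trans
    (max_le (natDegree_C_mul_le c p) (natDegree_laguerreStein_derivative_le γ p))

lemma Matrix.IsSymm.mul_mul_transpose_apply {m n R : Type*} [Fintype n] [CommSemiring R]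
    {W : Matrix n n R} (hW : W.IsSymm) (M N : Matrix m n R) (i j : m) :
    (M * W * Nᵀ) i j = (N * W * Mᵀ) j i := by
  rw [← transpose_apply (N * W * Mᵀ), transpose_mul, transpose_mul, transpose_transpose, hW.eq,
    Matrix.mul_assoc]

lemma map_eval_mul_smul_mul_transpose_map_eval {n : Type*} [Fintype n] (M W N : Matrix n n ℝ[X])
    (s x : ℝ) :
    M.map (eval x) * (s • W.map (eval x)) * (N.map (eval x))ᵀ =
      s • (M * W * Nᵀ).map (eval x) := by
  simp only [← coe_evalRingHom, Matrix.map_mul, Matrix.transpose_map, Matrix.mul_smul,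
    Matrix.smul_mul]

/-- `Q = diag(A, B) · V` for the Darboux transformer
`V = ∂ [[0, x], [-1, a x]] + [[-1/a, α + 1], [0, 1/a]]` acting on the right. -/
noncomputable def laguerreDarbouxMatrix (a α : ℝ) (A B : ℝ[X]) : Matrix (Fin 2) (Fin 2) ℝ[X] :=
  !![C (-(1/a)) * A, C (α + 1) * A + X * derivative A;
    -derivative B, C (1/a) * B + C a * X * derivative B]

noncomputable def laguerreWeightMatrix (a : ℝ) : Matrix (Fin 2) (Fin 2) ℝ[X] :=
  !![X * (1 + C (a ^ 2) * X), C a * X; C a * X, 1]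

lemma laguerreWeightMatrix_isSymm (a : ℝ) : (laguerreWeightMatrix a).IsSymm :=
  IsSymm.ext fun i j => by fin_cases i <;> fin_cases j <;> rfl

lemma laguerreWeightMatrix_map_eval (a x : ℝ) :
    (laguerreWeightMatrix a).map (eval x) = !![x * (1 + a ^ 2 * x), a * x; a * x, 1] := by
  ext i j
  fin_cases i <;> fin_cases j <;> simp [laguerreWeightMatrix]

lemma laguerreDarbouxMatrix_mul_weight_mul_transpose {a : ℝ} (ha : a ≠ 0) (α : ℝ)
    (A B F G : ℝ[X]) :
    laguerreDarbouxMatrix a α A B * laguerreWeightMatrix a * (laguerreDarbouxMatrix a α F G)ᵀ =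
      !![laguerreStein α (((C (α + 1) - X) * A + X * derivative A) * F) +
          X * ((C (1 + 1 / a ^ 2) * A - laguerreStein (α + 1) (derivative A)) * F),
        laguerreStein α (C (1 / a) * (A * G));
        laguerreStein α (C (1 / a) * (F * B)),
        laguerreStein α (derivative B * G) +
          (C (1 / a ^ 2) * B - laguerreStein α (derivative B)) * G] := by
  ext i j : 1
  apply Polynomial.funext
  intro x
  fin_cases i <;> fin_cases j <;>
    simp [laguerreDarbouxMatrix, laguerreWeightMatrix, laguerreStein, Matrix.mul_apply,
      Fin.sum_univ_two] <;>
    field_simp <;> ring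

lemma integral_laguerreDarbouxMatrix_entry (a α : ℝ) (A B F G : ℝ[X]) (i j : Fin 2) :
    ∫ x in Ioi 0, ((laguerreDarbouxMatrix a α A B).map (eval x) *
        ((exp (-x) * x ^ α) • !![x * (1 + a ^ 2 * x), a * x; a * x, 1]) *
        ((laguerreDarbouxMatrix a α F G).map (eval x))ᵀ) i j =
      laguerreIntegral α ((laguerreDarbouxMatrix a α A B * laguerreWeightMatrix a *
        (laguerreDarbouxMatrix a α F G)ᵀ) i j) := by
  rw [laguerreIntegral]
  congr 1 with x
  rw [← laguerreWeightMatrix_map_eval, map_eval_mul_smul_mul_transpose_map_eval,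
    Matrix.smul_apply, map_apply, smul_eq_mul, mul_comm]

lemma laguerreIntegral_laguerreDarbouxMatrix_entry_eq_zero {a α : ℝ} (ha : a ≠ 0)
    (hα : -1 < α) {La Lb : ℕ → ℝ[X]}
    (hLa_deg : ∀ n, (La n).degree = n) (hLb_deg : ∀ n, (Lb n).degree = n)
    (hLa : ∀ n m, n ≠ m → laguerreIntegral (α + 1) (La n * La m) = 0)
    (hLb : ∀ n m, n ≠ m → laguerreIntegral α (Lb n * Lb m) = 0)
    {n m : ℕ} (hnm : n ≠ m) (i j : Fin 2) :
    laguerreIntegral α ((laguerreDarbouxMatrix a α (La n) (Lb n) * laguerreWeightMatrix a *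
      (laguerreDarbouxMatrix a α (La m) (Lb m))ᵀ) i j) = 0 := by
  wlog hlt : n < m generalizing n m i j
  · rw [(laguerreWeightMatrix_isSymm a).mul_mul_transpose_apply]
    exact this hnm.symm j i (hnm.lt_or_gt.resolve_left hlt)
  have hdeg : ∀ {L : ℕ → ℝ[X]}, (∀ k, (L k).degree = k) → ∀ c γ,
      (C c * L n - laguerreStein γ (derivative (L n))).degree < (m : WithBot ℕ) := fun hL c γ =>
    (degree_le_of_natDegree_le ((natDegree_C_mul_sub_laguerreStein_derivative_le c γ _).trans
      (natDegree_eq_of_degree_eq_some (hL n)).le)).trans_lt (WithBot.coe_lt_coe.2 hlt)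
  rw [laguerreDarbouxMatrix_mul_weight_mul_transpose ha]
  revert i j
  simp only [Fin.forall_fin_two, of_apply, cons_val_zero, cons_val_one]
  refine ⟨⟨?_, ?_⟩, ?_, ?_⟩
  · rw [laguerreIntegral_laguerreStein_add hα, laguerreIntegral_X_mul]
    exact laguerreIntegral_mul_eq_zero_of_degree_lt (by linarith) hLa_deg hLa (hdeg hLa_deg _ _)
  · exact laguerreIntegral_laguerreStein hα _
  · exact laguerreIntegral_laguerreStein hα _
  · rw [laguerreIntegral_laguerreStein_add hα]
    exact laguerreIntegral_mul_eq_zero_of_degree_lt hα hLb_deg hLb (hdeg hLb_deg _ _)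

/-- Orthogonality of the matrix polynomials `Q_n` obtained from the monic Laguerre
polynomials of parameters `α+1` and `α` via the strong Darboux transformer `V`, with
respect to the Laguerre-type weight `W(x) = e^{-x}x^α [[x(1+a²x), ax],[ax,1]]`. -/
theorem stmt8 (a α : ℝ) (ha : a ≠ 0) (hα : -1 < α)
    (La Lb : ℕ → Polynomial ℝ)
    -- La n = monic Laguerre polynomial L_n^{α+1}, Lb n = L_n^α
    (hLaMonic : ∀ n, (La n).Monic ∧ (La n).natDegree = n)
    (hLbMonic : ∀ n, (Lb n).Monic ∧ (Lb n).natDegree = n)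
    (hLaOrth : ∀ n m, n ≠ m →
      ∫ x in Set.Ioi (0 : ℝ),
        (La n).eval x * (La m).eval x * (Real.exp (-x) * x ^ (α + 1)) = 0)
    (hLbOrth : ∀ n m, n ≠ m →
      ∫ x in Set.Ioi (0 : ℝ),
        (Lb n).eval x * (Lb m).eval x * (Real.exp (-x) * x ^ α) = 0) :
    ∀ n m, n ≠ m → ∀ i j : Fin 2,
      (∫ x in Set.Ioi (0 : ℝ),
        (((!![C (-(1/a)) * La n, C (α + 1) * La n + X * derivative (La n);
              -derivative (Lb n), C (1/a) * Lb n + C a * X * derivative (Lb n)] :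
            Matrix (Fin 2) (Fin 2) (Polynomial ℝ)).map (Polynomial.eval x)) *
          ((Real.exp (-x) * x ^ α) • !![x * (1 + a^2 * x), a * x; a * x, 1]) *
          ((!![C (-(1/a)) * La m, C (α + 1) * La m + X * derivative (La m);
              -derivative (Lb m), C (1/a) * Lb m + C a * X * derivative (Lb m)] :
            Matrix (Fin 2) (Fin 2) (Polynomial ℝ)).map (Polynomial.eval x))ᵀ) i j) = 0 := by
  have degree_eq {L : ℕ → ℝ[X]} (hL : ∀ n, (L n).Monic ∧ (L n).natDegree = n) (n : ℕ) :
      (L n).degree = n :=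
    (degree_eq_iff_natDegree_eq (hL n).1.ne_zero).2 (hL n).2
  have hLa : ∀ n m, n ≠ m → laguerreIntegral (α + 1) (La n * La m) = 0 := fun n m h => by
    simpa only [laguerreIntegral, eval_mul] using hLaOrth n m h
  have hLb : ∀ n m, n ≠ m → laguerreIntegral α (Lb n * Lb m) = 0 := fun n m h => by
    simpa only [laguerreIntegral, eval_mul] using hLbOrth n m h
  intro n m hnm i j
  exact (integral_laguerreDarbouxMatrix_entry a α _ _ _ _ i j).trans
    (laguerreIntegral_laguerreDarbouxMatrix_entry_eq_zero ha hα (degree_eq hLaMonic)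
      (degree_eq hLbMonic) hLa hLb hnm i j)
end

section
/- Let δ = ∂² - 2∂x be the scalar Hermite operator and a ≠ 0. Define the 2×2 differential operators V = ∂²[[0,1],[-1,ax²]] + ∂[[0,-4x],[0,0]] + [[4/a,-2],[0,4/a]] and N = ∂²[[ax²,-1],[1,0]] + ∂[[4ax,4x],[0,0]] + [[2a+4/a,2],[0,4/a]]. Then VN = diag(δ² - 6δ + 8 + 16/a², δ² + 2δ + 16/a²). -/
open Matrix

open scoped ContDiff

lemma sd {f : ℝ → ℝ} (hf : ContDiff ℝ ∞ f) : ContDiff ℝ ∞ (deriv f) :=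
  (contDiff_infty_iff_deriv.mp hf).2

lemma df {f : ℝ → ℝ} (hf : ContDiff ℝ ∞ f) : Differentiable ℝ f :=
  hf.differentiable (by simp)

/-- The scalar Hermite operator δ = ∂² - 2∂x, acting (on the right) on scalar functions. -/
noncomputable def hermDelta (f : ℝ → ℝ) : ℝ → ℝ :=
  fun x => deriv (deriv f) x - 2 * x * deriv f x

/-- The right action of `V = ∂²[[0,1],[-1,ax²]] + ∂[[0,-4x],[0,0]] + [[4/a,-2],[0,4/a]]`. -/
noncomputable def actV (a : ℝ) (P : ℝ → Matrix (Fin 2) (Fin 2) ℝ) :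
    ℝ → Matrix (Fin 2) (Fin 2) ℝ :=
  fun x => md (md P) x * !![0, 1; -1, a * x^2] + md P x * !![0, -4 * x; 0, 0] +
    P x * !![4/a, -2; 0, 4/a]

/-- The right action of `N = ∂²[[ax²,-1],[1,0]] + ∂[[4ax,4x],[0,0]] + [[2a+4/a,2],[0,4/a]]`. -/
noncomputable def actN (a : ℝ) (P : ℝ → Matrix (Fin 2) (Fin 2) ℝ) :
    ℝ → Matrix (Fin 2) (Fin 2) ℝ :=
  fun x => md (md P) x * !![a * x^2, -1; 1, 0] + md P x * !![4 * a * x, 4 * x; 0, 0] +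
    P x * !![2 * a + 4/a, 2; 0, 4/a]

lemma hermDelta_deriv (f : ℝ → ℝ) (hf : ContDiff ℝ ∞ f) :
    deriv (hermDelta f) = fun x =>
      deriv (deriv (deriv f)) x - 2 * deriv f x - 2 * x * deriv (deriv f) x := by
  have D1 := df (sd hf)
  have D2 := df (sd (sd hf))
  funext x
  exact (((D2 x).hasDerivAt.sub
    (((hasDerivAt_id' x).const_mul 2).mul (D1 x).hasDerivAt)).deriv).trans (by ring)

lemma hermDelta_eval (f : ℝ → ℝ) (x : ℝ) :
    hermDelta f x = deriv (deriv f) x - 2 * x * deriv f x := rfl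

lemma hermDelta2 (f : ℝ → ℝ) (hf : ContDiff ℝ ∞ f) (x : ℝ) :
    hermDelta (hermDelta f) x =
      deriv (deriv (deriv (deriv f))) x - 4 * x * deriv (deriv (deriv f)) x
        + (4 * x^2 - 4) * deriv (deriv f) x + 4 * x * deriv f x := by
  have D1 := df (sd hf)
  have D2 := df (sd (sd hf))
  have D3 := df (sd (sd (sd hf)))
  show deriv (deriv (hermDelta f)) x - 2 * x * deriv (hermDelta f) x = _
  rw [hermDelta_deriv f hf]
  have h : deriv (fun x =>
      deriv (deriv (deriv f)) x - 2 * deriv f x - 2 * x * deriv (deriv f) x) x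
      = deriv (deriv (deriv (deriv f))) x - 2 * deriv (deriv f) x
        - (2 * deriv (deriv f) x + 2 * x * deriv (deriv (deriv f)) x) :=
    ((((D3 x).hasDerivAt.sub ((D1 x).hasDerivAt.const_mul 2)).sub
      (((hasDerivAt_id' x).const_mul 2).mul (D2 x).hasDerivAt)).deriv).trans (by ring)
  rw [h]; ring

/-- `VN = diag(δ² - 6δ + 8 + 16/a², δ² + 2δ + 16/a²)` as matrix differential operators. -/
theorem stmt9 (a : ℝ) (ha : a ≠ 0)
    (P : ℝ → Matrix (Fin 2) (Fin 2) ℝ)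
    (hP : ∀ i j, ContDiff ℝ (⊤ : ℕ∞) fun t => P t i j) (x : ℝ) (i : Fin 2) :
    actN a (actV a P) x i 0 =
      hermDelta (hermDelta (fun t => P t i 0)) x - 6 * hermDelta (fun t => P t i 0) x +
        (8 + 16/a^2) * P x i 0 ∧
    actN a (actV a P) x i 1 =
      hermDelta (hermDelta (fun t => P t i 1)) x + 2 * hermDelta (fun t => P t i 1) x +
        (16/a^2) * P x i 1 := by
  have c0 : ContDiff ℝ ∞ (fun t => P t i 0) := (hP i 0).of_le (by simp)
  have c1 : ContDiff ℝ ∞ (fun t => P t i 1) := (hP i 1).of_le (by simp)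
  set f0 : ℝ → ℝ := fun t => P t i 0 with hf0
  set f1 : ℝ → ℝ := fun t => P t i 1 with hf1
  have D0 := df c0
  have D0a := df (sd c0)
  have D0b := df (sd (sd c0))
  have D0c := df (sd (sd (sd c0)))
  have D1 := df c1
  have D1a := df (sd c1)
  have D1b := df (sd (sd c1))
  have D1c := df (sd (sd (sd c1)))
  -- column 0 of V
  have hV0 : (fun t => actV a P t i 0)
      = fun t => -deriv (deriv f1) t + 4/a * f0 t := by
    funext t
    simp [actV, md, Matrix.mul_apply, Fin.sum_univ_two, hf0, hf1]
    ring
  have hV1 : (fun t => actV a P t i 1)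
      = fun t => deriv (deriv f0) t + a * t^2 * deriv (deriv f1) t
          - 4 * t * deriv f0 t - 2 * f0 t + 4/a * f1 t := by
    funext t
    simp [actV, md, Matrix.mul_apply, Fin.sum_univ_two, hf0, hf1]
    ring
  have m0 : deriv (fun t => actV a P t i 0)
      = fun t => -deriv (deriv (deriv f1)) t + 4/a * deriv f0 t := by
    rw [hV0]; funext t
    exact (((D1b t).hasDerivAt.neg.add ((D0 t).hasDerivAt.const_mul (4/a))).deriv)
  have m0' : ∀ t, deriv (deriv (fun s => actV a P s i 0)) t
      = -deriv (deriv (deriv (deriv f1))) t + 4/a * deriv (deriv f0) t := by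
    intro t; rw [m0]
    exact (((D1c t).hasDerivAt.neg.add ((D0a t).hasDerivAt.const_mul (4/a))).deriv)
  have m1 : deriv (fun t => actV a P t i 1)
      = fun t => deriv (deriv (deriv f0)) t + 2 * a * t * deriv (deriv f1) t
          + a * t^2 * deriv (deriv (deriv f1)) t - 6 * deriv f0 t
          - 4 * t * deriv (deriv f0) t + 4/a * deriv f1 t := by
    rw [hV1]; funext t
    have h := (((((D0b t).hasDerivAt.add
        (((hasDerivAt_pow 2 t).const_mul a).mul (D1b t).hasDerivAt)).sub
        (((hasDerivAt_id' t).const_mul 4).mul (D0a t).hasDerivAt)).sub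
        ((D0 t).hasDerivAt.const_mul 2)).add
        ((D1 t).hasDerivAt.const_mul (4/a))).deriv
    refine h.trans ?_; push_cast; ring
  have m1' : ∀ t, deriv (deriv (fun s => actV a P s i 1)) t
      = deriv (deriv (deriv (deriv f0))) t + 2 * a * deriv (deriv f1) t
          + 4 * a * t * deriv (deriv (deriv f1)) t
          + a * t^2 * deriv (deriv (deriv (deriv f1))) t
          - 10 * deriv (deriv f0) t - 4 * t * deriv (deriv (deriv f0)) t
          + 4/a * deriv (deriv f1) t := by
    intro t; rw [m1]
    have h := ((((((D0c t).hasDerivAt.add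
        ((((hasDerivAt_id' t).const_mul (2 * a)).mul (D1b t).hasDerivAt))).add
        (((hasDerivAt_pow 2 t).const_mul a).mul (D1c t).hasDerivAt)).sub
        ((D0a t).hasDerivAt.const_mul 6)).sub
        (((hasDerivAt_id' t).const_mul 4).mul (D0b t).hasDerivAt)).add
        ((D1a t).hasDerivAt.const_mul (4/a))).deriv
    refine h.trans ?_; push_cast; ring
  constructor
  · rw [hermDelta2 f0 c0, hermDelta_eval]
    simp [actN, md, Matrix.mul_apply, Fin.sum_univ_two]
    rw [m0' x, m1' x, congrFun m0 x, congrFun hV0 x]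
    simp only [hf0, hf1]
    field_simp
    ring
  · rw [hermDelta2 f1 c1, hermDelta_eval]
    simp [actN, md, Matrix.mul_apply, Fin.sum_univ_two]
    rw [m0' x, congrFun m0 x, congrFun hV0 x, congrFun hV1 x]
    simp only [hf0, hf1]
    field_simp
    ring
end

section
/- Let H_n denote the monic Hermite polynomials orthogonal with respect to e^{-x²} on ℝ, and a ≠ 0. For n ≥ 0 define Q_n(x) = [[(4/a)H_n(x), -2H_n(x) - 4x n H_{n-1}(x) + n(n-1)H_{n-2}(x)],[-n(n-1)H_{n-2}(x), (4/a)H_n(x) + a x² n(n-1) H_{n-2}(x)]] (with H_{-1}=H_{-2}=0). Then ∫_ℝ Q_n(x) W(x) Q_m(x)* dx = 0 for n ≠ m, where W(x) = e^{-x²}[[1+a²x⁴, ax²],[ax²,1]]. -/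
open Matrix Polynomial MeasureTheory Real

/-!
Write `J p = ∫ p(x) e^{-x²} dx`. The weight factors as `W = e^{-x²} T Tᵀ` with
`T = [[1, a x²], [0, 1]]`, and by the Hermite identities `H_n' = n H_{n-1}` and
`4 H_{n+2} = (4x² - 2 - 4x ∂ + ∂²) H_n` one gets `Q_n T = [[4/a H_n, 4 H_{n+2}], [-H_n'', 4/a H_n]]`.
So the entries of `∫ Q_n W Q_mᵀ` are sums of two terms `J (p q)`. On the diagonal both terms vanish
by orthogonality, as `H_n'' = n (n - 1) H_{n-2}`. Off the diagonal the two terms cancel, because `2x - ∂` is the adjoint of `∂`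
for `J` and raises `H_n` to `2 H_{n+1}`, so `J (H_n q'') = 4 J (H_{n+2} q)` for every `q`.

The Hermite identities themselves follow from monicity and orthogonality alone: a polynomial of
degree `≤ n` orthogonal to all polynomials of lower degree is a multiple of `H_n`.
-/

namespace GaussHermite

theorem integrable_eval_mul_exp_neg_sq (p : ℝ[X]) :
    Integrable (fun x : ℝ => p.eval x * exp (-x ^ 2)) := by
  induction p using Polynomial.induction_on' with
  | add p q hp hq => simpa [add_mul] using hp.fun_add hq
  | monomial k c =>
    have hk : (-1 : ℝ) < k := by linarith [(Nat.cast_nonneg k : (0 : ℝ) ≤ k)]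
    refine ((integrable_rpow_mul_exp_neg_mul_sq one_pos hk).const_mul c).congr
      (Filter.Eventually.of_forall fun x => ?_)
    simp [mul_assoc]

noncomputable def gaussIntegral : ℝ[X] →ₗ[ℝ] ℝ where
  toFun p := ∫ x, p.eval x * exp (-x ^ 2)
  map_add' p q := by
    simpa [add_mul] using
      integral_add (integrable_eval_mul_exp_neg_sq p) (integrable_eval_mul_exp_neg_sq q)
  map_smul' c p := by simp [mul_assoc, integral_const_mul]

theorem gaussIntegral_apply (p : ℝ[X]) :
    gaussIntegral p = ∫ x, p.eval x * exp (-x ^ 2) := rfl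

theorem gaussIntegral_C_mul (c : ℝ) (p : ℝ[X]) :
    gaussIntegral (C c * p) = c * gaussIntegral p := by
  rw [C_mul', map_smul, smul_eq_mul]

theorem gaussIntegral_C_mul_mul_C_mul (c d : ℝ) (p q : ℝ[X]) :
    gaussIntegral (C c * p * (C d * q)) = c * d * gaussIntegral (p * q) := by
  rw [mul_mul_mul_comm, ← C_mul, gaussIntegral_C_mul]

theorem hasDerivAt_eval_mul_exp_neg_sq (p : ℝ[X]) (x : ℝ) :
    HasDerivAt (fun x => p.eval x * exp (-x ^ 2))
      ((derivative p - 2 * X * p).eval x * exp (-x ^ 2)) x := by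
  refine ((p.hasDerivAt x).fun_mul (hasDerivAt_pow 2 x).fun_neg.exp).congr_deriv ?_
  simp only [eval_sub, eval_mul, eval_ofNat, eval_X]
  ring

theorem gaussIntegral_derivative_sub (p : ℝ[X]) :
    gaussIntegral (derivative p - 2 * X * p) = 0 :=
  integral_eq_zero_of_hasDerivAt_of_integrable (hasDerivAt_eval_mul_exp_neg_sq p)
    (integrable_eval_mul_exp_neg_sq _) (integrable_eval_mul_exp_neg_sq p)

theorem gaussIntegral_mul_derivative (p q : ℝ[X]) :
    gaussIntegral (p * derivative q) = gaussIntegral ((2 * X * p - derivative p) * q) := by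
  rw [← sub_eq_zero, ← map_sub]
  convert gaussIntegral_derivative_sub (p * q) using 2
  rw [derivative_mul]
  ring

theorem eq_zero_of_gaussIntegral_mul_self_eq_zero {p : ℝ[X]}
    (hp : gaussIntegral (p * p) = 0) : p = 0 := by
  have hcont : Continuous fun x => (p * p).eval x * exp (-x ^ 2) := by fun_prop
  rw [gaussIntegral_apply, integral_eq_zero_iff_of_nonneg
    (fun x => mul_nonneg (by rw [eval_mul]; exact mul_self_nonneg _) (exp_pos _).le)
    (integrable_eval_mul_exp_neg_sq _), hcont.ae_eq_iff_eq volume continuous_zero] at hp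
  refine Polynomial.funext fun x => ?_
  simpa [exp_ne_zero] using congrFun hp x

theorem degree_sub_C_coeff_mul_lt {R : Type*} [CommRing R] {q h : R[X]} (hh : h.Monic)
    (hq : q.degree ≤ h.natDegree) :
    (q - C (q.coeff h.natDegree) * h).degree < h.natDegree := by
  rw [degree_lt_iff_coeff_zero]
  intro m hm
  rw [degree_le_iff_coeff_zero] at hq
  rcases hm.eq_or_lt with rfl | hm
  · simp [hh.coeff_natDegree]
  · simp [hq m (by exact_mod_cast hm), coeff_eq_zero_of_natDegree_lt hm]

theorem integral_map_eval_mul_weight_mul_transpose {ι ι' κ μ : Type*} [Fintype κ] [Fintype μ]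
    (A : Matrix ι κ ℝ[X]) (M : Matrix κ μ ℝ[X]) (B : Matrix ι' κ ℝ[X]) (i : ι) (j : ι') :
    ∫ x : ℝ, (A.map (eval x) * (exp (-x ^ 2) • (M.map (eval x) * (M.map (eval x))ᵀ)) *
      (B.map (eval x))ᵀ) i j = gaussIntegral ((A * M * (B * M)ᵀ) i j) := by
  refine integral_congr_ae (Filter.Eventually.of_forall fun x => ?_)
  have hmap : (A * M * (B * M)ᵀ).map (eval x) =
      A.map (eval x) * M.map (eval x) * (B.map (eval x) * M.map (eval x))ᵀ := by
    simp only [← coe_evalRingHom, Matrix.map_mul, transpose_map]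
  calc _ = exp (-x ^ 2) *
        (A.map (eval x) * M.map (eval x) * (B.map (eval x) * M.map (eval x))ᵀ) i j := by
        simp only [Matrix.mul_smul, Matrix.smul_mul, Matrix.smul_apply, smul_eq_mul,
          transpose_mul, Matrix.mul_assoc]
    _ = _ := by rw [← hmap, Matrix.map_apply, mul_comm]

noncomputable section MatrixPolynomials

variable (a : ℝ) (H : ℕ → ℝ[X])

/-- `H (n - 1)` and `H (n - 2)` use truncated subtraction; they only matter for `n ≥ 1`,
resp. `n ≥ 2`, since their coefficients vanish otherwise. -/
def Q (n : ℕ) : Matrix (Fin 2) (Fin 2) ℝ[X] :=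
  !![C (4/a) * H n,
      C (-2) * H n - C (4 * (n : ℝ)) * X * H (n - 1) +
        C ((n : ℝ) * ((n : ℝ) - 1)) * H (n - 2);
      -(C ((n : ℝ) * ((n : ℝ) - 1)) * H (n - 2)),
      C (4/a) * H n + C (a * (n : ℝ) * ((n : ℝ) - 1)) * X ^ 2 * H (n - 2)]

def weightFactor : Matrix (Fin 2) (Fin 2) ℝ[X] := !![1, C a * X ^ 2; 0, 1]

def R (n : ℕ) : Matrix (Fin 2) (Fin 2) ℝ[X] :=
  !![C (4 / a) * H n, C 4 * H (n + 2); -derivative (derivative (H n)), C (4 / a) * H n]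

theorem weight_eq_weightFactor_mul_transpose (x : ℝ) :
    !![1 + a ^ 2 * x ^ 4, a * x ^ 2; a * x ^ 2, 1] =
      (weightFactor a).map (eval x) * ((weightFactor a).map (eval x))ᵀ := by
  ext i j
  fin_cases i <;> fin_cases j <;>
    simp only [weightFactor, Matrix.mul_apply, Fin.sum_univ_two, map_apply, transpose_apply,
      of_apply, cons_val', cons_val_zero, cons_val_one, cons_val_fin_one, Fin.zero_eta, Fin.mk_one,
      Fin.isValue, eval_one, eval_zero, eval_mul, eval_C, eval_pow, eval_X, mul_one, mul_zero,
      one_mul, zero_add]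
  ring

end MatrixPolynomials

section Hermite

variable {H : ℕ → ℝ[X]} (hMonic : ∀ n, (H n).Monic ∧ (H n).natDegree = n)
include hMonic

theorem coeff_H_self (n : ℕ) : (H n).coeff n = 1 := by
  simpa [(hMonic n).2] using (hMonic n).1.coeff_natDegree

theorem gaussIntegral_mul_eq_zero_of_degree_lt {p q : ℝ[X]} {n : ℕ}
    (hp : ∀ k < n, gaussIntegral (p * H k) = 0) (hq : q.degree < n) :
    gaussIntegral (p * q) = 0 := by
  induction n generalizing q with
  | zero =>
    simp only [CharP.cast_eq_zero, Nat.WithBot.lt_zero_iff, degree_eq_bot] at hq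
    simp [hq]
  | succ n ih =>
    have hqn : q.degree ≤ (H n).natDegree := by
      rw [(hMonic n).2]
      exact Order.le_of_lt_succ hq
    have hr := degree_sub_C_coeff_mul_lt (hMonic n).1 hqn
    rw [(hMonic n).2] at hr
    have hsplit : p * q = p * (q - C (q.coeff n) * H n) + C (q.coeff n) * (p * H n) := by ring
    rw [hsplit, map_add, gaussIntegral_C_mul, hp n n.lt_succ_self,
      ih (fun k hk => hp k (Nat.lt_succ_of_lt hk)) hr, mul_zero, add_zero]

variable (hOrth : ∀ n m, n ≠ m → gaussIntegral (H n * H m) = 0)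
include hOrth

theorem eq_C_coeff_mul_H {p : ℝ[X]} {n : ℕ} (hp : p.degree ≤ n)
    (horth : ∀ k < n, gaussIntegral (p * H k) = 0) : p = C (p.coeff n) * H n := by
  set d := p - C (p.coeff n) * H n with hd
  have hdeg : d.degree < n := by
    simpa [(hMonic n).2] using degree_sub_C_coeff_mul_lt (hMonic n).1 (by rwa [(hMonic n).2])
  have hHn : gaussIntegral (H n * d) = 0 :=
    gaussIntegral_mul_eq_zero_of_degree_lt hMonic (fun k hk => hOrth n k hk.ne') hdeg
  have hdd : gaussIntegral (d * d) = 0 := by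
    rw [show d * d = p * d - C (p.coeff n) * (H n * d) by rw [hd]; ring, map_sub,
      gaussIntegral_C_mul, hHn, gaussIntegral_mul_eq_zero_of_degree_lt hMonic horth hdeg]
    ring
  exact sub_eq_zero.mp (eq_zero_of_gaussIntegral_mul_self_eq_zero hdd)

theorem two_mul_H_succ (n : ℕ) : 2 * H (n + 1) = 2 * X * H n - derivative (H n) := by
  set p := 2 * X * H n - derivative (H n)
  have hderiv : (derivative (H n)).natDegree ≤ n :=
    (natDegree_derivative_le _).trans (by rw [(hMonic n).2]; omega)
  have hdeg : p.natDegree ≤ n + 1 := by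
    refine (natDegree_sub_le _ _).trans (max_le ?_ (hderiv.trans n.le_succ))
    rw [mul_assoc]
    refine (natDegree_C_mul_le _ _).trans (natDegree_mul_le.trans ?_)
    rw [(hMonic n).2]
    have := natDegree_X_le (R := ℝ)
    omega
  have hcoeff : p.coeff (n + 1) = 2 := by
    rw [coeff_sub, mul_assoc, coeff_ofNat_mul, coeff_X_mul, coeff_H_self hMonic,
      coeff_derivative, coeff_eq_zero_of_natDegree_lt (by rw [(hMonic n).2]; omega)]
    ring
  have horth : ∀ k < n + 1, gaussIntegral (p * H k) = 0 := by
    intro k hk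
    rw [← gaussIntegral_mul_derivative]
    refine gaussIntegral_mul_eq_zero_of_degree_lt hMonic (fun j hj => hOrth n j hj.ne') ?_
    calc (derivative (H k)).degree < (H k).degree := degree_derivative_lt (hMonic k).1.ne_zero
      _ = k := by rw [degree_eq_natDegree (hMonic k).1.ne_zero, (hMonic k).2]
      _ ≤ n := by exact_mod_cast Nat.lt_succ_iff.mp hk
  rw [eq_C_coeff_mul_H hMonic hOrth (degree_le_of_natDegree_le hdeg) horth, hcoeff, C_ofNat]

theorem gaussIntegral_H_mul_derivative (n : ℕ) (q : ℝ[X]) :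
    gaussIntegral (H n * derivative q) = 2 * gaussIntegral (H (n + 1) * q) := by
  rw [gaussIntegral_mul_derivative, ← two_mul_H_succ hMonic hOrth, mul_assoc, ← C_ofNat,
    gaussIntegral_C_mul]

theorem gaussIntegral_H_mul_derivative_derivative (n : ℕ) (q : ℝ[X]) :
    gaussIntegral (H n * derivative (derivative q)) = 4 * gaussIntegral (H (n + 2) * q) := by
  rw [gaussIntegral_H_mul_derivative hMonic hOrth, gaussIntegral_H_mul_derivative hMonic hOrth]
  ring

theorem derivative_H_succ (n : ℕ) : derivative (H (n + 1)) = C ((n : ℝ) + 1) * H n := by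
  have hdeg : (derivative (H (n + 1))).natDegree ≤ n :=
    (natDegree_derivative_le _).trans (by rw [(hMonic (n + 1)).2]; omega)
  have horth : ∀ k < n, gaussIntegral (derivative (H (n + 1)) * H k) = 0 := by
    intro k hk
    rw [mul_comm, gaussIntegral_H_mul_derivative hMonic hOrth, hOrth _ _ (by omega), mul_zero]
  rw [eq_C_coeff_mul_H hMonic hOrth (degree_le_of_natDegree_le hdeg) horth, coeff_derivative,
    coeff_H_self hMonic, one_mul]

theorem derivative_H (n : ℕ) : derivative (H n) = C (n : ℝ) * H (n - 1) := by
  cases n with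
  | zero => simp [derivative_of_natDegree_zero (hMonic 0).2]
  | succ n => simp [derivative_H_succ hMonic hOrth]

theorem derivative_derivative_H (n : ℕ) :
    derivative (derivative (H n)) = C ((n : ℝ) * ((n : ℝ) - 1)) * H (n - 2) := by
  rcases n with _ | _ | n
  · simp [derivative_H hMonic hOrth]
  · simp [derivative_H hMonic hOrth]
  · rw [derivative_H_succ hMonic hOrth, derivative_C_mul, derivative_H_succ hMonic hOrth,
      ← mul_assoc, ← C_mul]
    push_cast
    congr 2
    ring

theorem four_mul_H_add_two (n : ℕ) :
    4 * H (n + 2) = 4 * X ^ 2 * H n - 2 * H n - 4 * X * derivative (H n)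
      + derivative (derivative (H n)) := by
  have h1 := two_mul_H_succ hMonic hOrth n
  have h2 := two_mul_H_succ hMonic hOrth (n + 1)
  have h3 := congrArg derivative h1
  simp only [derivative_mul, derivative_sub, derivative_X, derivative_ofNat] at h3
  linear_combination 2 * h2 + 2 * X * h1 - h3

theorem gaussIntegral_derivative_derivative_H_mul {n m : ℕ} (hnm : n ≠ m) :
    gaussIntegral (derivative (derivative (H n)) * derivative (derivative (H m))) = 0 := by
  rcases n with _ | _ | n
  · simp [derivative_derivative_H hMonic hOrth 0]
  · simp [derivative_derivative_H hMonic hOrth 1]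
  · rw [derivative_derivative_H hMonic hOrth, mul_assoc, gaussIntegral_C_mul,
      gaussIntegral_H_mul_derivative_derivative hMonic hOrth, Nat.sub_add_cancel (by omega),
      hOrth _ _ hnm, mul_zero, mul_zero]

theorem Q_mul_weightFactor {a : ℝ} (ha : a ≠ 0) (n : ℕ) :
    Q a H n * weightFactor a = R a H n := by
  have hH (x : ℝ) : 4 * (H (n + 2)).eval x = 4 * x ^ 2 * (H n).eval x - 2 * (H n).eval x
      - 4 * n * x * (H (n - 1)).eval x + n * (n - 1) * (H (n - 2)).eval x := by
    have h := four_mul_H_add_two hMonic hOrth n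
    rw [derivative_derivative_H hMonic hOrth, derivative_H hMonic hOrth] at h
    have hx := congrArg (eval x) h
    simp only [eval_add, eval_sub, eval_mul, eval_pow, eval_X, eval_C, eval_ofNat] at hx
    linear_combination hx
  refine Matrix.ext fun i j => Polynomial.funext fun x => ?_
  fin_cases i <;> fin_cases j <;>
    simp only [Q, weightFactor, R, Matrix.mul_apply, Fin.sum_univ_two, of_apply, cons_val',
      cons_val_zero, cons_val_one, cons_val_fin_one, Fin.zero_eta, Fin.mk_one, Fin.isValue,
      derivative_derivative_H hMonic hOrth, eval_add, eval_sub, eval_mul, eval_neg, eval_pow,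
      eval_X, eval_C, mul_one, mul_zero, add_zero]
  · linear_combination (x ^ 2 * eval x (H n)) * div_mul_cancel₀ 4 ha - hH x
  · ring

theorem gaussIntegral_R_mul_R_transpose (a : ℝ) {n m : ℕ} (hnm : n ≠ m) (i j : Fin 2) :
    gaussIntegral ((R a H n * (R a H m)ᵀ) i j) = 0 := by
  fin_cases i <;> fin_cases j <;>
    simp only [R, Matrix.mul_apply, Fin.sum_univ_two, transpose_apply, of_apply, cons_val',
      cons_val_zero, cons_val_one, cons_val_fin_one, Fin.zero_eta, Fin.mk_one, Fin.isValue,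
      map_add, neg_mul, mul_neg, map_neg, neg_neg, gaussIntegral_C_mul_mul_C_mul]
  · rw [hOrth n m hnm, hOrth (n + 2) (m + 2) (by omega)]
    ring
  · rw [mul_assoc, gaussIntegral_C_mul, gaussIntegral_H_mul_derivative_derivative hMonic hOrth]
    ring
  · rw [mul_left_comm, gaussIntegral_C_mul, mul_comm (derivative _),
      gaussIntegral_H_mul_derivative_derivative hMonic hOrth, mul_comm (H n)]
    ring
  · rw [gaussIntegral_derivative_derivative_H_mul hMonic hOrth hnm, hOrth n m hnm]
    ring

end Hermite

end GaussHermite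

open GaussHermite

/-- Orthogonality of the matrix polynomials `Q_n` obtained from the monic Hermite
polynomials via the degree-preserving operator `V`, with respect to the Hermite-type
weight `W(x) = e^{-x²}[[1+a²x⁴, ax²],[ax²,1]]`.  Here `H_{-1} = H_{-2} = 0` is encoded by
the vanishing numerical coefficients `n` and `n(n-1)` (truncated subtraction on `ℕ`). -/
theorem stmt10 (a : ℝ) (ha : a ≠ 0)
    (H : ℕ → Polynomial ℝ)
    (hMonic : ∀ n, (H n).Monic ∧ (H n).natDegree = n)
    (hOrth : ∀ n m, n ≠ m →
      ∫ x : ℝ, (H n).eval x * (H m).eval x * Real.exp (-x ^ 2) = 0) :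
    ∀ n m, n ≠ m → ∀ i j : Fin 2,
      (∫ x : ℝ,
        (((!![C (4/a) * H n,
              C (-2) * H n - C (4 * (n : ℝ)) * X * H (n - 1) +
                C ((n : ℝ) * ((n : ℝ) - 1)) * H (n - 2);
              -(C ((n : ℝ) * ((n : ℝ) - 1)) * H (n - 2)),
              C (4/a) * H n + C (a * (n : ℝ) * ((n : ℝ) - 1)) * X ^ 2 * H (n - 2)] :
            Matrix (Fin 2) (Fin 2) (Polynomial ℝ)).map (Polynomial.eval x)) *
          ((Real.exp (-x ^ 2)) • !![1 + a^2 * x^4, a * x^2; a * x^2, 1]) *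
          ((!![C (4/a) * H m,
              C (-2) * H m - C (4 * (m : ℝ)) * X * H (m - 1) +
                C ((m : ℝ) * ((m : ℝ) - 1)) * H (m - 2);
              -(C ((m : ℝ) * ((m : ℝ) - 1)) * H (m - 2)),
              C (4/a) * H m + C (a * (m : ℝ) * ((m : ℝ) - 1)) * X ^ 2 * H (m - 2)] :
            Matrix (Fin 2) (Fin 2) (Polynomial ℝ)).map (Polynomial.eval x))ᵀ) i j) = 0 := by
  have hOrth' : ∀ n m, n ≠ m → gaussIntegral (H n * H m) = 0 := fun n m hnm => by
    simpa [gaussIntegral_apply] using hOrth n m hnm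
  intro n m hnm i j
  simp only [weight_eq_weightFactor_mul_transpose a]
  change ∫ x : ℝ, ((Q a H n).map (eval x) * (exp (-x ^ 2) • ((weightFactor a).map (eval x) *
    ((weightFactor a).map (eval x))ᵀ)) * ((Q a H m).map (eval x))ᵀ) i j = 0
  rw [integral_map_eval_mul_weight_mul_transpose, Q_mul_weightFactor hMonic hOrth' ha,
    Q_mul_weightFactor hMonic hOrth' ha]
  exact gaussIntegral_R_mul_R_transpose hMonic hOrth' a hnm i j
end

section
/- Let a ≠ 0 and W(x) = e^{-x²}[[1+a²x⁴, ax²],[ax²,1]]. The second-order differential operator D₁ = ∂² I + ∂[[-2x, 4ax],[0,-2x]] + [[0,2a],[0,4]] satisfies the three symmetry equations: F₂W = W F₂*, 2(F₂W)' - F₁W = W F₁*, and (F₂W)'' - (F₁W)' + F₀W = W F₀*, where F₂ = I, F₁(x) = [[-2x,4ax],[0,-2x]], F₀ = [[0,2a],[0,4]]. -/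
open Matrix Real

/-- The Hermite-type weight `W(x) = e^{-x²}[[1+a²x⁴, ax²],[ax²,1]]`. -/
noncomputable def herW (a : ℝ) (x : ℝ) : Matrix (Fin 2) (Fin 2) ℝ :=
  (Real.exp (-x ^ 2)) • !![1 + a^2 * x^4, a * x^2; a * x^2, 1]

/-! The weight and every derivative appearing in the equations have the form `e^{-x²} P(x)` with
`P` a polynomial matrix, and `(e^{-x²} P)' = e^{-x²} (P' - 2x P)`. After cancelling `e^{-x²}`,
each symmetry equation is a polynomial identity, checked entrywise. -/

lemma md_fin_two {p q r s : ℝ → ℝ} (x : ℝ) :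
    md (fun t => !![p t, q t; r t, s t]) x = !![deriv p x, deriv q x; deriv r x, deriv s x] := by
  ext i j
  fin_cases i <;> fin_cases j <;> rfl

lemma md_exp_neg_sq_smul {P : ℝ → Matrix (Fin 2) (Fin 2) ℝ} {x : ℝ}
    (hP : ∀ i j, DifferentiableAt ℝ (fun t => P t i j) x) :
    md (fun t => rexp (-t ^ 2) • P t) x = rexp (-x ^ 2) • (md P x - (2 * x) • P x) := by
  have hexp : deriv (fun t => rexp (-t ^ 2)) x = -(2 * x) * rexp (-x ^ 2) := by
    simp [mul_comm]
  ext i j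
  simp only [md, of_apply, Matrix.smul_apply, smul_eq_mul, Matrix.sub_apply]
  rw [deriv_fun_mul (by fun_prop) (hP i j), hexp]
  ring

lemma md_exp_neg_sq_smul_fin_two {p q r s : ℝ → ℝ} {x : ℝ} (hp : DifferentiableAt ℝ p x)
    (hq : DifferentiableAt ℝ q x) (hr : DifferentiableAt ℝ r x) (hs : DifferentiableAt ℝ s x) :
    md (fun t => rexp (-t ^ 2) • !![p t, q t; r t, s t]) x = rexp (-x ^ 2) •
      !![deriv p x - 2 * x * p x, deriv q x - 2 * x * q x;
         deriv r x - 2 * x * r x, deriv s x - 2 * x * s x] := by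
  rw [md_exp_neg_sq_smul, md_fin_two]
  · ext i j; fin_cases i <;> fin_cases j <;> simp
  · intro i j; fin_cases i <;> fin_cases j <;> assumption

lemma md_herW (a : ℝ) : md (herW a) = fun x => rexp (-x ^ 2) •
    !![4 * a ^ 2 * x ^ 3 - 2 * x * (1 + a ^ 2 * x ^ 4), 2 * a * x - 2 * a * x ^ 3;
       2 * a * x - 2 * a * x ^ 3, -2 * x] := by
  funext x
  unfold herW
  rw [md_exp_neg_sq_smul_fin_two (by fun_prop) (by fun_prop) (by fun_prop) (by fun_prop)]
  congr 1
  ext i j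
  fin_cases i <;> fin_cases j <;> simp (disch := fun_prop) <;> ring

lemma md_md_herW (a x : ℝ) : md (md (herW a)) x = rexp (-x ^ 2) •
    !![-2 + 4 * x ^ 2 + 12 * a ^ 2 * x ^ 2 - 18 * a ^ 2 * x ^ 4 + 4 * a ^ 2 * x ^ 6,
         2 * a - 10 * a * x ^ 2 + 4 * a * x ^ 4;
       2 * a - 10 * a * x ^ 2 + 4 * a * x ^ 4, -2 + 4 * x ^ 2] := by
  rw [md_herW, md_exp_neg_sq_smul_fin_two (by fun_prop) (by fun_prop) (by fun_prop) (by fun_prop)]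
  congr 1
  ext i j
  fin_cases i <;> fin_cases j <;> simp (disch := fun_prop) <;> ring

lemma md_F₁_mul_herW (a x : ℝ) :
    md (fun t => !![-2 * t, 4 * a * t; 0, -2 * t] * herW a t) x = rexp (-x ^ 2) •
      !![-2 + 4 * x ^ 2 + 12 * a ^ 2 * x ^ 2 - 18 * a ^ 2 * x ^ 4 + 4 * a ^ 2 * x ^ 6,
           4 * a - 14 * a * x ^ 2 + 4 * a * x ^ 4;
         -6 * a * x ^ 2 + 4 * a * x ^ 4, -2 + 4 * x ^ 2] := by
  simp only [herW, Matrix.mul_smul, mul_fin_two]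
  rw [md_exp_neg_sq_smul_fin_two (by fun_prop) (by fun_prop) (by fun_prop) (by fun_prop)]
  congr 1
  ext i j
  fin_cases i <;> fin_cases j <;> simp (disch := fun_prop) <;> ring

theorem stmt11_general (a : ℝ) (x : ℝ) :
    (1 : Matrix (Fin 2) (Fin 2) ℝ) * herW a x =
      herW a x * (1 : Matrix (Fin 2) (Fin 2) ℝ)ᵀ ∧
    (2 : ℝ) • md (fun t => (1 : Matrix (Fin 2) (Fin 2) ℝ) * herW a t) x -
        !![-2 * x, 4 * a * x; 0, -2 * x] * herW a x =
      herW a x * (!![-2 * x, 4 * a * x; 0, -2 * x] : Matrix (Fin 2) (Fin 2) ℝ)ᵀ ∧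
    md (md (fun t => (1 : Matrix (Fin 2) (Fin 2) ℝ) * herW a t)) x -
        md (fun t => !![-2 * t, 4 * a * t; 0, -2 * t] * herW a t) x +
        !![0, 2 * a; 0, 4] * herW a x =
      herW a x * (!![0, 2 * a; 0, 4] : Matrix (Fin 2) (Fin 2) ℝ)ᵀ := by
  simp only [Matrix.one_mul, transpose_one, Matrix.mul_one]
  rw [md_md_herW, md_F₁_mul_herW, md_herW]
  refine ⟨trivial, ?_, ?_⟩ <;>
  · ext i j
    fin_cases i <;> fin_cases j <;> simp [herW, Matrix.mul_apply, Fin.sum_univ_two] <;> ring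

/-- The coefficients `F₂ = I`, `F₁ = [[-2x,4ax],[0,-2x]]`, `F₀ = [[0,2a],[0,4]]` of
`D₁` satisfy the three symmetry equations with respect to `W`. -/
theorem stmt11 (a : ℝ) (ha : a ≠ 0) (x : ℝ) :
    (1 : Matrix (Fin 2) (Fin 2) ℝ) * herW a x =
      herW a x * (1 : Matrix (Fin 2) (Fin 2) ℝ)ᵀ ∧
    (2 : ℝ) • md (fun t => (1 : Matrix (Fin 2) (Fin 2) ℝ) * herW a t) x -
        !![-2 * x, 4 * a * x; 0, -2 * x] * herW a x =
      herW a x * (!![-2 * x, 4 * a * x; 0, -2 * x] : Matrix (Fin 2) (Fin 2) ℝ)ᵀ ∧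
    md (md (fun t => (1 : Matrix (Fin 2) (Fin 2) ℝ) * herW a t)) x -
        md (fun t => !![-2 * t, 4 * a * t; 0, -2 * t] * herW a t) x +
        !![0, 2 * a; 0, 4] * herW a x =
      herW a x * (!![0, 2 * a; 0, 4] : Matrix (Fin 2) (Fin 2) ℝ)ᵀ :=
  stmt11_general a x
end

section
/- Let H_n be the monic Hermite polynomials and a ≠ 0. The matrix polynomials Q_n(x) = [[-(2/a)H_n(x), n H_{n-1}(x)],[n H_{n-1}(x), -(2/a)H_n(x) - a n x H_{n-1}(x)]] have leading coefficient diag(-2/a, -2/a - an) (which is nonsingular) and satisfy ∫_ℝ Q_n(x) W(x) Q_m(x)* dx = 0 for n ≠ m, where W(x) = e^{-x²}[[1+a²x², ax],[ax,1]]. -/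
open Matrix Polynomial MeasureTheory Real

/-!
The Gaussian functional `L p = ∫ p(x) e^{-x²} dx` is positive definite and, by integration by
parts, satisfies `L (p q') = L ((2 X p - p') q)`. For a monic orthogonal family `H` this forces
`2 H_{n+1} = 2 X H_n - H_n'`, since the difference has degree at most `n` and is orthogonal to
`H_0, …, H_n`; differentiating the recurrence gives `H_n' = n H_{n-1}`.

With the shear `T = [[1, a x], [0, 1]]` one has `W = T e^{-x²} Tᵀ`, and the recurrence turns
`Q_n T` into `[[-(2/a) H_n, -2 H_{n+1}], [H_n', -(2/a) H_n]]`. Hence `∫ Q_n W Q_mᵀ` is `L` applied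
to a product of two such matrices: its diagonal entries vanish by orthogonality of the `H_n` and
of the `H_n'`, its off-diagonal ones because `L (H_n H_m') = 2 L (H_{n+1} H_m)` for all `n, m`.
-/

theorem integrable_eval_mul_exp_neg_sq (p : ℝ[X]) :
    Integrable fun x : ℝ => p.eval x * exp (-x ^ 2) := by
  have hmonomial (i : ℕ) : Integrable fun x : ℝ => x ^ i * exp (-x ^ 2) := by
    simpa [Real.rpow_natCast] using
      integrable_rpow_mul_exp_neg_mul_sq one_pos (s := i) (by linarith [i.cast_nonneg (α := ℝ)])
  simp_rw [eval_eq_sum_range, Finset.sum_mul, mul_assoc]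
  exact integrable_finsetSum _ fun i _ => (hmonomial i).const_mul _

noncomputable def gaussIntegral : ℝ[X] →ₗ[ℝ] ℝ where
  toFun p := ∫ x, p.eval x * exp (-x ^ 2)
  map_add' p q := by
    simp only [eval_add, add_mul]
    exact integral_add (integrable_eval_mul_exp_neg_sq p) (integrable_eval_mul_exp_neg_sq q)
  map_smul' c p := by
    simp only [eval_smul, smul_eq_mul, mul_assoc, integral_const_mul, RingHom.id_apply]

theorem gaussIntegral_apply (p : ℝ[X]) :
    gaussIntegral p = ∫ x, p.eval x * exp (-x ^ 2) := rfl

theorem gaussIntegral_C_mul (c : ℝ) (p : ℝ[X]) :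
    gaussIntegral (C c * p) = c * gaussIntegral p := by
  rw [← smul_eq_C_mul, map_smul, smul_eq_mul]

theorem gaussIntegral_two_mul (p : ℝ[X]) : gaussIntegral (2 * p) = 2 * gaussIntegral p := by
  rw [← gaussIntegral_C_mul, C_ofNat]

theorem gaussIntegral_derivative (p : ℝ[X]) :
    gaussIntegral (derivative p) = gaussIntegral (2 * X * p) := by
  have hderiv (x : ℝ) : HasDerivAt (fun x => p.eval x * exp (-x ^ 2))
      ((derivative p - 2 * X * p).eval x * exp (-x ^ 2)) x := by
    refine ((p.hasDerivAt x).fun_mul (hasDerivAt_pow 2 x).fun_neg.exp).congr_deriv ?_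
    simp only [eval_sub, eval_mul, eval_X, eval_ofNat]
    ring
  have h := integral_eq_zero_of_hasDerivAt_of_integrable hderiv
    (integrable_eval_mul_exp_neg_sq _) (integrable_eval_mul_exp_neg_sq p)
  rwa [← gaussIntegral_apply, map_sub, sub_eq_zero] at h

theorem gaussIntegral_mul_derivative (p q : ℝ[X]) :
    gaussIntegral (p * derivative q) = gaussIntegral ((2 * X * p - derivative p) * q) := by
  have h := gaussIntegral_derivative (p * q)
  rw [derivative_mul] at h
  rw [sub_mul, map_sub, mul_assoc, ← h, map_add, add_sub_cancel_left]

theorem gaussIntegral_mul_self_pos {p : ℝ[X]} (hp : p ≠ 0) : 0 < gaussIntegral (p * p) := by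
  have hcont : Continuous fun x => (p * p).eval x * exp (-x ^ 2) := by fun_prop
  obtain ⟨x, hx⟩ : ∃ x, p.eval x ≠ 0 := by
    by_contra! h
    exact hp (Polynomial.funext (by simpa using h))
  rw [gaussIntegral_apply, integral_pos_iff_support_of_nonneg
    (fun x => by simpa using mul_nonneg (mul_self_nonneg (p.eval x)) (exp_pos _).le)
    (integrable_eval_mul_exp_neg_sq _)]
  exact hcont.isOpen_support.measure_pos volume ⟨x, by simp [hx, exp_ne_zero]⟩

section MonicFamily

variable {R : Type*} [CommRing R] {L : R[X] →ₗ[R] R} {H : ℕ → R[X]}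

theorem map_mul_eq_zero_of_degree_lt (hH : ∀ n, (H n).Monic ∧ (H n).natDegree = n)
    {r : R[X]} {d : ℕ} (hr : ∀ j < d, L (H j * r) = 0) {q : R[X]} (hq : q.degree < d) :
    L (q * r) = 0 := by
  induction d generalizing q with
  | zero => simp [show q = 0 by simpa using hq]
  | succ d ih =>
    have hcoeff : (H d).coeff d = 1 := by
      simpa [(hH d).2] using (hH d).1.coeff_natDegree
    have hlower : (q - C (q.coeff d) * H d).degree < d := by
      rw [degree_lt_iff_coeff_zero] at hq ⊢
      intro m hm
      rcases hm.eq_or_lt with rfl | hm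
      · simp [hcoeff]
      · simp [hq m hm, coeff_eq_zero_of_natDegree_lt ((hH d).2 ▸ hm)]
    have hsplit : q * r = (q - C (q.coeff d) * H d) * r + q.coeff d • (H d * r) := by
      rw [smul_eq_C_mul]
      ring
    rw [hsplit, map_add, map_smul, ih (fun j hj => hr j (by omega)) hlower,
      hr d (by omega), smul_zero, add_zero]

theorem map_mul_eq_zero_of_orthogonal (hH : ∀ n, (H n).Monic ∧ (H n).natDegree = n)
    (hO : ∀ n m, n ≠ m → L (H n * H m) = 0) {q : R[X]} {n : ℕ} (hq : q.degree < n) :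
    L (q * H n) = 0 :=
  map_mul_eq_zero_of_degree_lt hH (fun j hj => hO j n hj.ne) hq

theorem degree_X_mul_sub_succ_lt [Nontrivial R] (hH : ∀ n, (H n).Monic ∧ (H n).natDegree = n)
    (n : ℕ) : (X * H n - H (n + 1)).degree < ↑(n + 1) := by
  have hmonic : (X * H n).Monic := monic_X.mul (hH n).1
  have hXH : (X * H n).degree = ↑(n + 1) := by
    rw [degree_eq_natDegree hmonic.ne_zero, natDegree_X_mul (hH n).1.ne_zero, (hH n).2]
  have hH' : (H (n + 1)).degree = ↑(n + 1) := by
    rw [degree_eq_natDegree (hH (n + 1)).1.ne_zero, (hH (n + 1)).2]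
  simpa [hXH] using degree_sub_lt_left (hXH.trans hH'.symm) hmonic.ne_zero
    (by rw [hmonic.leadingCoeff, (hH (n + 1)).1.leadingCoeff])

end MonicFamily

section Hermite

variable {H : ℕ → ℝ[X]}

theorem two_mul_hermite_succ (hH : ∀ n, (H n).Monic ∧ (H n).natDegree = n)
    (hO : ∀ n m, n ≠ m → gaussIntegral (H n * H m) = 0) (n : ℕ) :
    2 * H (n + 1) = 2 * X * H n - derivative (H n) := by
  have hdegree (k : ℕ) : (H k).degree = k := by
    rw [degree_eq_natDegree (hH k).1.ne_zero, (hH k).2]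
  set r := 2 * X * H n - derivative (H n) - 2 * H (n + 1) with hr
  have hr_degree : r.degree < ↑(n + 1) := by
    have hder : (derivative (H n)).degree < ↑(n + 1) :=
      (degree_derivative_lt (hH n).1.ne_zero).trans
        (by rw [hdegree]; exact_mod_cast n.lt_succ_self)
    have hr_eq : r = (2 : ℝ) • (X * H n - H (n + 1)) - derivative (H n) := by
      rw [hr, smul_eq_C_mul, C_ofNat]
      ring
    rw [hr_eq]
    exact (degree_sub_le _ _).trans_lt
      (max_lt ((degree_smul_le _ _).trans_lt (degree_X_mul_sub_succ_lt hH n)) hder)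
  have hr_orth : ∀ j < n + 1, gaussIntegral (H j * r) = 0 := by
    intro j hj
    have hlow : gaussIntegral (derivative (H j) * H n) = 0 :=
      map_mul_eq_zero_of_orthogonal hH hO ((degree_derivative_lt (hH j).1.ne_zero).trans_le
        (by rw [hdegree]; exact_mod_cast Nat.lt_succ_iff.mp hj))
    have hsplit : H j * r = (2 * X * H j - derivative (H j)) * H n - H j * derivative (H n)
        + derivative (H j) * H n - 2 * (H j * H (n + 1)) := by
      rw [hr]
      ring
    rw [hsplit, map_sub, map_add, map_sub, gaussIntegral_mul_derivative, hlow,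
      gaussIntegral_two_mul, hO j (n + 1) hj.ne]
    ring
  have hr_zero : r = 0 := by
    by_contra hne
    exact (gaussIntegral_mul_self_pos hne).ne'
      (map_mul_eq_zero_of_degree_lt hH hr_orth hr_degree)
  rw [hr, sub_eq_zero] at hr_zero
  exact hr_zero.symm

theorem derivative_hermite (hH : ∀ n, (H n).Monic ∧ (H n).natDegree = n)
    (hO : ∀ n m, n ≠ m → gaussIntegral (H n * H m) = 0) (n : ℕ) :
    derivative (H n) = C (n : ℝ) * H (n - 1) := by
  induction n with
  | zero => simp [derivative_of_natDegree_zero (hH 0).2]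
  | succ n ih =>
    have hprev : C (n : ℝ) * (2 * X * H (n - 1) - derivative (H (n - 1))) =
        C (n : ℝ) * (2 * H n) := by
      rcases n with _ | k
      · simp
      · rw [Nat.add_sub_cancel, two_mul_hermite_succ hH hO k]
    have hd := congrArg derivative (two_mul_hermite_succ hH hO n)
    simp only [derivative_mul, derivative_sub, derivative_X, derivative_ofNat, derivative_C,
      ih] at hd
    refine mul_left_cancel₀ (two_ne_zero : (2 : ℝ[X]) ≠ 0) ?_
    simp only [Nat.add_sub_cancel, Nat.cast_succ, C_add, C_1]
    linear_combination hd + hprev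

theorem gaussIntegral_hermite_mul_derivative (hH : ∀ n, (H n).Monic ∧ (H n).natDegree = n)
    (hO : ∀ n m, n ≠ m → gaussIntegral (H n * H m) = 0) (n m : ℕ) :
    gaussIntegral (H n * derivative (H m)) = 2 * gaussIntegral (H (n + 1) * H m) := by
  rw [gaussIntegral_mul_derivative, ← two_mul_hermite_succ hH hO, mul_assoc,
    gaussIntegral_two_mul]

theorem gaussIntegral_derivative_hermite_mul_derivative
    (hH : ∀ n, (H n).Monic ∧ (H n).natDegree = n)
    (hO : ∀ n m, n ≠ m → gaussIntegral (H n * H m) = 0) {n m : ℕ} (hnm : n ≠ m) :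
    gaussIntegral (derivative (H n) * derivative (H m)) = 0 := by
  rw [derivative_hermite hH hO, derivative_hermite hH hO]
  rcases n with _ | n
  · simp
  rcases m with _ | m
  · simp
  rw [Nat.add_sub_cancel, Nat.add_sub_cancel, mul_mul_mul_comm, ← C_mul, gaussIntegral_C_mul,
    hO n m (by omega), mul_zero]

end Hermite

noncomputable def hermiteQ (H : ℕ → ℝ[X]) (a : ℝ) (n : ℕ) : Matrix (Fin 2) (Fin 2) ℝ[X] :=
  !![C (-(2/a)) * H n, C (n : ℝ) * H (n - 1);
     C (n : ℝ) * H (n - 1), C (-(2/a)) * H n - C (a * (n : ℝ)) * X * H (n - 1)]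

noncomputable def shear (a : ℝ) : Matrix (Fin 2) (Fin 2) ℝ[X] :=
  !![1, C a * X; 0, 1]

noncomputable def hermiteQShear (H : ℕ → ℝ[X]) (a : ℝ) (n : ℕ) : Matrix (Fin 2) (Fin 2) ℝ[X] :=
  !![(-(2 / a)) • H n, (-2 : ℝ) • H (n + 1); derivative (H n), (-(2 / a)) • H n]

section HermiteQ

variable {H : ℕ → ℝ[X]}

theorem natDegree_hermiteQ_le (hH : ∀ n, (H n).Monic ∧ (H n).natDegree = n) (a : ℝ) (n : ℕ)
    (i j : Fin 2) : (hermiteQ H a n i j).natDegree ≤ n := by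
  have h0 : (C (-(2 / a)) * H n).natDegree ≤ n := (natDegree_C_mul_le _ _).trans (hH n).2.le
  have h1 : (C (n : ℝ) * H (n - 1)).natDegree ≤ n :=
    (natDegree_C_mul_le _ _).trans ((hH (n - 1)).2.trans_le (n.sub_le 1))
  have h2 : (C (a * n) * X * H (n - 1)).natDegree ≤ n := by
    rcases n with _ | k
    · simp
    · rw [mul_assoc, Nat.add_sub_cancel]
      refine (natDegree_C_mul_le _ _).trans ?_
      rw [natDegree_X_mul (hH k).1.ne_zero, (hH k).2]
  fin_cases i <;> fin_cases j
  exacts [h0, h1, h1, (natDegree_sub_le _ _).trans (max_le h0 h2)]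

theorem coeff_hermiteQ (hH : ∀ n, (H n).Monic ∧ (H n).natDegree = n) (a : ℝ) (n : ℕ) :
    (Matrix.of fun i j => (hermiteQ H a n i j).coeff n) =
      !![-(2 / a), 0; 0, -(2 / a) - a * n] := by
  have hcoeff (k : ℕ) : (H k).coeff k = 1 := by
    simpa [(hH k).2] using (hH k).1.coeff_natDegree
  have h0 : (C (-(2 / a)) * H n).coeff n = -(2 / a) := by rw [coeff_C_mul, hcoeff, mul_one]
  have h1 : (C (n : ℝ) * H (n - 1)).coeff n = 0 := by
    rcases n with _ | k
    · simp
    · rw [coeff_C_mul, coeff_eq_zero_of_natDegree_lt (by rw [(hH _).2]; omega), mul_zero]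
  have h2 : (C (a * n) * X * H (n - 1)).coeff n = a * n := by
    rcases n with _ | k
    · simp
    · rw [mul_assoc, coeff_C_mul, Nat.add_sub_cancel, coeff_X_mul, hcoeff, mul_one]
  refine Matrix.ext fun i j => ?_
  fin_cases i <;> fin_cases j <;>
    simp only [hermiteQ, of_apply, cons_val', cons_val_fin_one, cons_val_zero, cons_val_one,
      Fin.zero_eta, Fin.mk_one, Fin.isValue, coeff_sub, h0, h1, h2]

theorem isUnit_hermiteQ_leading {a : ℝ} (ha : a ≠ 0) (n : ℕ) :
    IsUnit !![-(2 / a), 0; 0, -(2 / a) - a * n] := by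
  have hdet : -(2 / a) * (-(2 / a) - a * n) - 0 * 0 = 2 * (2 + a ^ 2 * n) / a ^ 2 := by
    field_simp
    ring
  rw [isUnit_iff_isUnit_det, det_fin_two_of, isUnit_iff_ne_zero, hdet]
  positivity

theorem hermiteQ_mul_shear (hH : ∀ n, (H n).Monic ∧ (H n).natDegree = n)
    (hO : ∀ n m, n ≠ m → gaussIntegral (H n * H m) = 0) {a : ℝ} (ha : a ≠ 0) (n : ℕ) :
    hermiteQ H a n * shear a = hermiteQShear H a n := by
  have hC : C (2 / a) * C a = 2 := by rw [← C_mul, div_mul_cancel₀ _ ha, C_ofNat]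
  have hD : derivative (H n) = n * H (n - 1) := by
    rw [derivative_hermite hH hO, map_natCast]
  refine Matrix.ext fun i j => ?_
  fin_cases i <;> fin_cases j <;>
    simp only [hermiteQ, shear, hermiteQShear, mul_apply, Fin.sum_univ_two, of_apply, cons_val',
      cons_val_zero, cons_val_one, cons_val_fin_one, Fin.isValue, Fin.zero_eta, Fin.mk_one, map_neg,
      map_natCast, map_mul, neg_mul, neg_smul, mul_one, mul_zero, add_zero, smul_eq_C_mul, C_ofNat,
      hD]
  · linear_combination (-(X * H n)) * hC + two_mul_hermite_succ hH hO n - hD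
  · ring

theorem gaussIntegral_hermiteQShear_mul_transpose (hH : ∀ n, (H n).Monic ∧ (H n).natDegree = n)
    (hO : ∀ n m, n ≠ m → gaussIntegral (H n * H m) = 0) (a : ℝ) {n m : ℕ} (hnm : n ≠ m)
    (i j : Fin 2) : gaussIntegral ((hermiteQShear H a n * (hermiteQShear H a m)ᵀ) i j) = 0 := by
  have h01 := gaussIntegral_hermite_mul_derivative hH hO n m
  have h10 := gaussIntegral_hermite_mul_derivative hH hO m n
  rw [mul_comm (H m), mul_comm (H (m + 1))] at h10
  fin_cases i <;> fin_cases j <;>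
    simp only [hermiteQShear, mul_apply, transpose_apply, Fin.sum_univ_two, of_apply, cons_val',
      cons_val_zero, cons_val_one, cons_val_fin_one, Fin.isValue, Fin.zero_eta, Fin.mk_one,
      neg_smul, neg_mul, mul_neg, neg_neg, smul_neg, Algebra.smul_mul_assoc,
      Algebra.mul_smul_comm, smul_smul, map_add, map_neg, map_smul, smul_eq_mul, h01, h10,
      hO n m hnm, hO (n + 1) (m + 1) (by omega),
      gaussIntegral_derivative_hermite_mul_derivative hH hO hnm] <;>
    ring

theorem weight_eq_shear_mul_transpose (a x : ℝ) :
    !![1 + a ^ 2 * x ^ 2, a * x; a * x, 1] =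
      (shear a).map (eval x) * ((shear a).map (eval x))ᵀ := by
  refine Matrix.ext fun i j => ?_
  fin_cases i <;> fin_cases j <;>
    simp only [shear, mul_apply, map_apply, transpose_apply, Fin.sum_univ_two, of_apply,
      cons_val', cons_val_zero, cons_val_one, cons_val_fin_one, Fin.isValue, Fin.zero_eta,
      Fin.mk_one, eval_zero, eval_one, eval_mul, eval_C, eval_X, mul_zero, mul_one, one_mul,
      zero_add]
  ring

theorem hermiteQ_weight_mul_transpose_eval (hH : ∀ n, (H n).Monic ∧ (H n).natDegree = n)
    (hO : ∀ n m, n ≠ m → gaussIntegral (H n * H m) = 0) {a : ℝ} (ha : a ≠ 0) (n m : ℕ) (x : ℝ) :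
    (hermiteQ H a n).map (eval x) * (exp (-x ^ 2) • !![1 + a ^ 2 * x ^ 2, a * x; a * x, 1]) *
        ((hermiteQ H a m).map (eval x))ᵀ =
      exp (-x ^ 2) • (hermiteQShear H a n * (hermiteQShear H a m)ᵀ).map (eval x) := by
  have hmap (M N : Matrix (Fin 2) (Fin 2) ℝ[X]) :
      (M * N).map (eval x) = M.map (eval x) * N.map (eval x) := by
    simpa using Matrix.map_mul (L := M) (M := N) (f := evalRingHom x)
  rw [weight_eq_shear_mul_transpose, Matrix.mul_smul, Matrix.smul_mul,
    ← hermiteQ_mul_shear hH hO ha, ← hermiteQ_mul_shear hH hO ha, transpose_mul]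
  simp only [hmap, transpose_map, Matrix.mul_assoc]

theorem integral_hermiteQ_weight_mul_transpose (hH : ∀ n, (H n).Monic ∧ (H n).natDegree = n)
    (hO : ∀ n m, n ≠ m → gaussIntegral (H n * H m) = 0) {a : ℝ} (ha : a ≠ 0) (n m : ℕ)
    (i j : Fin 2) :
    ∫ x, ((hermiteQ H a n).map (eval x) *
        (exp (-x ^ 2) • !![1 + a ^ 2 * x ^ 2, a * x; a * x, 1]) *
        ((hermiteQ H a m).map (eval x))ᵀ) i j =
      gaussIntegral ((hermiteQShear H a n * (hermiteQShear H a m)ᵀ) i j) := by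
  simp_rw [hermiteQ_weight_mul_transpose_eval hH hO ha, Matrix.smul_apply, map_apply, smul_eq_mul,
    mul_comm (exp _)]
  rfl

end HermiteQ

/-- The matrix polynomials
`Q_n = [[-(2/a)H_n, n H_{n-1}],[n H_{n-1}, -(2/a)H_n - a n x H_{n-1}]]`
have nonsingular leading coefficient `diag(-2/a, -2/a - an)` and are orthogonal with
respect to `W(x) = e^{-x²}[[1+a²x², ax],[ax,1]]`. -/
theorem stmt14 (a : ℝ) (ha : a ≠ 0)
    (H : ℕ → Polynomial ℝ)
    (hMonic : ∀ n, (H n).Monic ∧ (H n).natDegree = n)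
    (hOrth : ∀ n m, n ≠ m →
      ∫ x : ℝ, (H n).eval x * (H m).eval x * Real.exp (-x ^ 2) = 0) :
    (∀ n : ℕ, (∀ i j : Fin 2,
        ((!![C (-(2/a)) * H n, C (n : ℝ) * H (n - 1);
             C (n : ℝ) * H (n - 1), C (-(2/a)) * H n - C (a * (n : ℝ)) * X * H (n - 1)] :
          Matrix (Fin 2) (Fin 2) (Polynomial ℝ)) i j).natDegree ≤ n) ∧
      (Matrix.of fun i j : Fin 2 =>
          ((!![C (-(2/a)) * H n, C (n : ℝ) * H (n - 1);
               C (n : ℝ) * H (n - 1), C (-(2/a)) * H n - C (a * (n : ℝ)) * X * H (n - 1)] :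
            Matrix (Fin 2) (Fin 2) (Polynomial ℝ)) i j).coeff n) =
        !![-(2/a), 0; 0, -(2/a) - a * (n : ℝ)] ∧
      IsUnit (!![-(2/a), 0; 0, -(2/a) - a * (n : ℝ)] : Matrix (Fin 2) (Fin 2) ℝ)) ∧
    ∀ n m, n ≠ m → ∀ i j : Fin 2,
      (∫ x : ℝ,
        (((!![C (-(2/a)) * H n, C (n : ℝ) * H (n - 1);
              C (n : ℝ) * H (n - 1), C (-(2/a)) * H n - C (a * (n : ℝ)) * X * H (n - 1)] :
            Matrix (Fin 2) (Fin 2) (Polynomial ℝ)).map (Polynomial.eval x)) *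
          ((Real.exp (-x ^ 2)) • !![1 + a^2 * x^2, a * x; a * x, 1]) *
          ((!![C (-(2/a)) * H m, C (m : ℝ) * H (m - 1);
              C (m : ℝ) * H (m - 1), C (-(2/a)) * H m - C (a * (m : ℝ)) * X * H (m - 1)] :
            Matrix (Fin 2) (Fin 2) (Polynomial ℝ)).map (Polynomial.eval x))ᵀ) i j) = 0 := by
  have hO : ∀ n m, n ≠ m → gaussIntegral (H n * H m) = 0 := fun n m hnm => by
    simpa [gaussIntegral_apply] using hOrth n m hnm
  refine ⟨fun n => ⟨natDegree_hermiteQ_le hMonic a n, coeff_hermiteQ hMonic a n,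
    isUnit_hermiteQ_leading ha n⟩, fun n m hnm i j => ?_⟩
  exact (integral_hermiteQ_weight_mul_transpose hMonic hO ha n m i j).trans
    (gaussIntegral_hermiteQShear_mul_transpose hMonic hO a hnm i j)
end
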